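/- arXiv:2004.08578 — 5 statements merged into one kernel-verified Lean document; each statement's English description precedes it below -/
import Mathlib

section
/- Define r_V̄ := (V̄/a₁)^{1/q}, T₃′ := min{ r_x/(η·r_V̄ + θ·r_z), r_z(1 − κ̂)/(σ·κ̂·(θ·r_z + η·r_V̄)) }, T₃ := min{T₃′, T₂}, κ := κ̂(1 + T₃·σ·θ), and γ := σ·κ̂·η. Then κ < 1, and for every x ∈ X_V̄, every z with ‖z − z̄(x)‖ ≤ r_z, and every T ∈ (0, T₃], the next state x₊ := ψ(T; x, M z) and next optimizer iterate z₊ := φ(x₊, z) satisfy ‖z₊ − z̄(x₊)‖ ≤ κ·‖z − z̄(x)‖ + T·γ·‖x‖ and ‖z₊ − z̄(x₊)‖ ≤ r_z. -/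
/-- Combined error contraction (Proposition 5 of the paper):
with `r_V̄ := (V̄/a₁)^{1/q}`, `T₃′ := min{ r_x/(η r_V̄ + θ r_z),
r_z(1−κ̂)/(σκ̂(θ r_z + η r_V̄)) }`, `T₃ := min{T₃′, T₂}`, `κ := κ̂(1 + T₃ σ θ)` and
`γ := σκ̂η`, one has `κ < 1` and, for `x ∈ X_V̄`, `‖z − z̄(x)‖ ≤ r_z`, `T ∈ (0, T₃]`,
the next iterate satisfies `‖z₊ − z̄(x₊)‖ ≤ κ‖z − z̄(x)‖ + Tγ‖x‖` and
`‖z₊ − z̄(x₊)‖ ≤ r_z`. -/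
theorem combined_error_contraction {nx nz nu : ℕ}
    (V : EuclideanSpace ℝ (Fin nx) → ℝ) (Vbar : ℝ)
    (zbar : EuclideanSpace ℝ (Fin nx) → EuclideanSpace ℝ (Fin nz))
    (ψ : ℝ → EuclideanSpace ℝ (Fin nx) → EuclideanSpace ℝ (Fin nu) →
      EuclideanSpace ℝ (Fin nx))
    (φ : EuclideanSpace ℝ (Fin nx) → EuclideanSpace ℝ (Fin nz) →
      EuclideanSpace ℝ (Fin nz))
    (M : EuclideanSpace ℝ (Fin nz) →L[ℝ] EuclideanSpace ℝ (Fin nu))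
    (a₁ q rx rz T₂ κhat σ η θ : ℝ)
    (ha₁ : 0 < a₁) (hq : 1 ≤ q) (hrx : 0 < rx) (hrz : 0 < rz) (hT₂ : 0 < T₂)
    (hκ0 : 0 < κhat) (hκ1 : κhat < 1) (hσ : 0 < σ) (hη : 0 < η) (hθ : 0 < θ)
    (hVbar : 0 < Vbar)
    (hlow : ∀ x : EuclideanSpace ℝ (Fin nx), V x ≤ Vbar → a₁ * ‖x‖ ^ q ≤ V x)
    (hstate : ∀ x : EuclideanSpace ℝ (Fin nx), V x ≤ Vbar →
      ∀ z : EuclideanSpace ℝ (Fin nz), ‖z - zbar x‖ ≤ rz →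
      ∀ T : ℝ, 0 < T → T ≤ T₂ →
        ‖ψ T x (M z) - x‖ ≤ T * (η * ‖x‖ + θ * ‖z - zbar x‖))
    (hcontr : ∀ x : EuclideanSpace ℝ (Fin nx), V x ≤ Vbar →
      ∀ z : EuclideanSpace ℝ (Fin nz), ‖z - zbar x‖ ≤ rz →
      ∀ x' : EuclideanSpace ℝ (Fin nx), ‖x' - x‖ ≤ rx →
        ‖φ x' z - zbar x'‖ ≤ κhat * ‖z - zbar x‖ + σ * κhat * ‖x' - x‖)
    (rV T₃' T₃ κ γ : ℝ)
    (hrV : rV = (Vbar / a₁) ^ (1/q))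
    (hT₃' : T₃' = min (rx / (η * rV + θ * rz))
      (rz * (1 - κhat) / (σ * κhat * (θ * rz + η * rV))))
    (hT₃ : T₃ = min T₃' T₂)
    (hκ : κ = κhat * (1 + T₃ * σ * θ))
    (hγ : γ = σ * κhat * η) :
    κ < 1 ∧
    ∀ x : EuclideanSpace ℝ (Fin nx), V x ≤ Vbar →
      ∀ z : EuclideanSpace ℝ (Fin nz), ‖z - zbar x‖ ≤ rz →
      ∀ T : ℝ, 0 < T → T ≤ T₃ →
        ‖φ (ψ T x (M z)) z - zbar (ψ T x (M z))‖ ≤ κ * ‖z - zbar x‖ + T * γ * ‖x‖ ∧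
        ‖φ (ψ T x (M z)) z - zbar (ψ T x (M z))‖ ≤ rz := by
  have hq0 : (0:ℝ) < q := lt_of_lt_of_le one_pos hq
  have hrVpos : 0 < rV := by
    rw [hrV]; exact Real.rpow_pos_of_pos (by positivity) _
  have hd1 : 0 < η * rV + θ * rz := by positivity
  have hd2 : 0 < σ * κhat * (θ * rz + η * rV) := by positivity
  have hT₃pos : 0 < T₃ := by
    rw [hT₃, hT₃']
    have h1k : 0 < 1 - κhat := by linarith
    exact lt_min (lt_min (div_pos hrx hd1) (div_pos (mul_pos hrz h1k) hd2)) hT₂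
  have hT₃T₂ : T₃ ≤ T₂ := by rw [hT₃]; exact min_le_right _ _
  have hA : T₃ * (η * rV + θ * rz) ≤ rx := by
    have h : T₃ ≤ rx / (η * rV + θ * rz) := by
      rw [hT₃, hT₃']
      exact le_trans (min_le_left _ _) (min_le_left _ _)
    exact (le_div_iff₀ hd1).mp h
  have hB : T₃ * (σ * κhat * (θ * rz + η * rV)) ≤ rz * (1 - κhat) := by
    have h : T₃ ≤ rz * (1 - κhat) / (σ * κhat * (θ * rz + η * rV)) := by
      rw [hT₃, hT₃']
      exact le_trans (min_le_left _ _) (min_le_right _ _)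
    exact (le_div_iff₀ hd2).mp h
  have hκlt : κ < 1 := by
    rw [hκ]
    nlinarith [mul_pos (mul_pos (mul_pos (mul_pos hT₃pos hσ) hκ0) hη) hrVpos]
  refine ⟨hκlt, ?_⟩
  intro x hx z hz T hT0 hTT₃
  have hTT₂ : T ≤ T₂ := le_trans hTT₃ hT₃T₂
  have hxrV : ‖x‖ ≤ rV := by
    have h1 : ‖x‖ ^ q ≤ Vbar / a₁ := by
      rw [le_div_iff₀' ha₁]
      exact le_trans (hlow x hx) hx
    have h2 : (‖x‖ ^ q) ^ (1/q) ≤ (Vbar / a₁) ^ (1/q) :=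
      Real.rpow_le_rpow (Real.rpow_nonneg (norm_nonneg x) q) h1 (by positivity)
    rwa [← Real.rpow_mul (norm_nonneg x), mul_one_div, div_self (ne_of_gt hq0),
      Real.rpow_one, ← hrV] at h2
  obtain ⟨d, hdd⟩ : ∃ d, ‖z - zbar x‖ = d := ⟨_, rfl⟩
  rw [hdd] at hz
  have hd0 : 0 ≤ d := hdd ▸ norm_nonneg _
  obtain ⟨w, hww⟩ : ∃ w, ‖x‖ = w := ⟨_, rfl⟩
  have hw0 : 0 ≤ w := hww ▸ norm_nonneg _
  rw [hww] at hxrV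
  obtain ⟨e, hee⟩ : ∃ e, ‖ψ T x (M z) - x‖ = e := ⟨_, rfl⟩
  have he0 : 0 ≤ e := hee ▸ norm_nonneg _
  have h1 : e ≤ T * (η * w + θ * d) := by
    rw [← hee, ← hww, ← hdd]
    exact hstate x hx z (hdd ▸ hz) T hT0 hTT₂
  have hxrx : e ≤ rx := by
    have h2 : T * (η * w + θ * d) ≤ T₃ * (η * rV + θ * rz) := by
      have hle : η * w + θ * d ≤ η * rV + θ * rz := by
        have := mul_le_mul_of_nonneg_left hxrV hη.le
        have := mul_le_mul_of_nonneg_left hz hθ.le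
        linarith
      exact mul_le_mul hTT₃ hle (by positivity) hT₃pos.le
    linarith
  have h2 : ‖φ (ψ T x (M z)) z - zbar (ψ T x (M z))‖ ≤ κhat * d + σ * κhat * e := by
    rw [← hdd, ← hee]
    exact hcontr x hx z (hdd ▸ hz) (ψ T x (M z)) (hee ▸ hxrx)
  have hkey : κhat * d + σ * κhat * e ≤ κ * d + T * γ * w := by
    rw [hκ, hγ]
    have b1 : σ * κhat * e ≤ σ * κhat * (T * (η * w + θ * d)) :=
      mul_le_mul_of_nonneg_left h1 (by positivity)
    have b2 : T * (σ * κhat * θ * d) ≤ T₃ * (σ * κhat * θ * d) :=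
      mul_le_mul_of_nonneg_right hTT₃ (by positivity)
    nlinarith [b1, b2]
  have h3 : κ * d + T * γ * w ≤ rz := by
    rw [hκ, hγ]
    have a1 : T₃ * σ * κhat * θ * d ≤ T₃ * σ * κhat * θ * rz :=
      mul_le_mul_of_nonneg_left hz (by positivity)
    have a2 : σ * κhat * η * (T * w) ≤ σ * κhat * η * (T₃ * rV) :=
      mul_le_mul_of_nonneg_left (mul_le_mul hTT₃ hxrV hw0 hT₃pos.le) (by positivity)
    have a3 : κhat * d ≤ κhat * rz := mul_le_mul_of_nonneg_left hz hκ0.le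
    linarith [hB, a1, a2, a3]
  have hfull : ‖φ (ψ T x (M z)) z - zbar (ψ T x (M z))‖ ≤ κ * d + T * γ * w :=
    le_trans h2 hkey
  rw [hdd, hww]
  exact ⟨hfull, le_trans hfull h3⟩
end

section
/- Define r̃_z := min{r_z, ā·V̄/μ}, the set Σ := {(x, z) ∈ ℝ^{n_x}×ℝ^{n_z} : V(x) ≤ V̄ and ‖z − z̄(x)‖ ≤ r̃_z}, T₄′ := (1 − κ)·r̃_z·a₁^{1/q} / (V̄^{1/q}·γ), and γ̂ := γ/a₁^{1/q}. Then for every T ∈ (0, min{T₄′, T₃}] and every (x, z) ∈ Σ, the successor (x₊, z₊) with x₊ := ψ(T; x, M z) and z₊ := φ(x₊, z) satisfies (x₊, z₊) ∈ Σ, and moreover V(x₊) ≤ (1 − T·ā)·V(x) + T·μ·‖z − z̄(x)‖ and ‖z₊ − z̄(x₊)‖ ≤ T·γ̂·V(x)^{1/q} + κ·‖z − z̄(x)‖. -/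
/-- Invariance of `Σ` and the coupled contraction estimates
(Lemma 2 of the paper): with `r̃_z := min{r_z, ā·V̄/μ}`,
`Σ := {(x,z) : V(x) ≤ V̄, ‖z − z̄(x)‖ ≤ r̃_z}`,
`T₄′ := (1−κ)·r̃_z·a₁^{1/q}/(V̄^{1/q}·γ)` and `γ̂ := γ/a₁^{1/q}`, for every
`T ∈ (0, min{T₄′, T₃}]` and `(x,z) ∈ Σ` the successor stays in `Σ` and
`V(x₊) ≤ (1 − Tā)V(x) + Tμ‖z − z̄(x)‖`,
`‖z₊ − z̄(x₊)‖ ≤ Tγ̂·V(x)^{1/q} + κ‖z − z̄(x)‖`. -/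
theorem sigma_invariance {nx nz nu : ℕ}
    (V : EuclideanSpace ℝ (Fin nx) → ℝ) (Vbar : ℝ) (hVbar : 0 < Vbar)
    (hVnonneg : ∀ x : EuclideanSpace ℝ (Fin nx), 0 ≤ V x)
    (zbar : EuclideanSpace ℝ (Fin nx) → EuclideanSpace ℝ (Fin nz))
    (ψ : ℝ → EuclideanSpace ℝ (Fin nx) → EuclideanSpace ℝ (Fin nu) →
      EuclideanSpace ℝ (Fin nx))
    (φ : EuclideanSpace ℝ (Fin nx) → EuclideanSpace ℝ (Fin nz) →
      EuclideanSpace ℝ (Fin nz))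
    (M : EuclideanSpace ℝ (Fin nz) →L[ℝ] EuclideanSpace ℝ (Fin nu))
    (a₁ abar μ γ rz T₃ κ q : ℝ)
    (ha₁ : 0 < a₁) (habar : 0 < abar) (hμ : 0 < μ) (hγ : 0 < γ)
    (hrz : 0 < rz) (hT₃ : 0 < T₃) (hκ0 : 0 ≤ κ) (hκ1 : κ < 1) (hq : 1 ≤ q)
    (hT₃abar : T₃ * abar ≤ 1)
    (hlow : ∀ x : EuclideanSpace ℝ (Fin nx), V x ≤ Vbar → a₁ * ‖x‖ ^ q ≤ V x)
    (hstep : ∀ x : EuclideanSpace ℝ (Fin nx), V x ≤ Vbar →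
      ∀ z : EuclideanSpace ℝ (Fin nz), ‖z - zbar x‖ ≤ rz →
      ∀ T : ℝ, 0 < T → T ≤ T₃ →
        V (ψ T x (M z)) ≤ (1 - T * abar) * V x + T * μ * ‖z - zbar x‖ ∧
        ‖φ (ψ T x (M z)) z - zbar (ψ T x (M z))‖ ≤ κ * ‖z - zbar x‖ + T * γ * ‖x‖ ∧
        ‖φ (ψ T x (M z)) z - zbar (ψ T x (M z))‖ ≤ rz)
    (rtz T₄' γhat : ℝ)
    (hrtz : rtz = min rz (abar * Vbar / μ))
    (hT₄' : T₄' = (1 - κ) * rtz * a₁ ^ (1/q) / (Vbar ^ (1/q) * γ))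
    (hγhat : γhat = γ / a₁ ^ (1/q)) :
    ∀ T : ℝ, 0 < T → T ≤ min T₄' T₃ →
      ∀ x : EuclideanSpace ℝ (Fin nx), ∀ z : EuclideanSpace ℝ (Fin nz),
        V x ≤ Vbar → ‖z - zbar x‖ ≤ rtz →
        (V (ψ T x (M z)) ≤ Vbar ∧
          ‖φ (ψ T x (M z)) z - zbar (ψ T x (M z))‖ ≤ rtz) ∧
        V (ψ T x (M z)) ≤ (1 - T * abar) * V x + T * μ * ‖z - zbar x‖ ∧
        ‖φ (ψ T x (M z)) z - zbar (ψ T x (M z))‖ ≤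
          T * γhat * V x ^ (1/q) + κ * ‖z - zbar x‖ := by

  intro T hT hTle x z hVx hdz
  have hq0 : (0:ℝ) < q := lt_of_lt_of_le one_pos hq
  have hiq : (0:ℝ) < 1/q := by positivity
  have hrtz_pos : 0 < rtz := by
    rw [hrtz]; exact lt_min hrz (by positivity)
  have hdz' : ‖z - zbar x‖ ≤ rz := hdz.trans (hrtz ▸ min_le_left _ _)
  have hTT3 : T ≤ T₃ := hTle.trans (min_le_right _ _)
  have hTT4 : T ≤ T₄' := hTle.trans (min_le_left _ _)
  obtain ⟨h1, h2, h3⟩ := hstep x hVx z hdz' T hT hTT3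
  -- bound on ‖x‖
  have hxq : ‖x‖ ^ q ≤ V x / a₁ := by
    rw [le_div_iff₀ ha₁]; linarith [hlow x hVx]
  have hx_bound : ‖x‖ ≤ (V x / a₁) ^ (1/q) := by
    have h := Real.rpow_le_rpow (by positivity) hxq (le_of_lt hiq)
    rwa [← Real.rpow_mul (norm_nonneg x),
      mul_one_div, div_self (ne_of_gt hq0), Real.rpow_one] at h
  have hsplit : (V x / a₁) ^ (1/q) = V x ^ (1/q) / a₁ ^ (1/q) :=
    Real.div_rpow (hVnonneg x) ha₁.le (1/q)
  have key2 : ‖φ (ψ T x (M z)) z - zbar (ψ T x (M z))‖ ≤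
      T * γhat * V x ^ (1/q) + κ * ‖z - zbar x‖ := by
    have hTγ : T * γ * ‖x‖ ≤ T * γhat * V x ^ (1/q) := by
      have : γ * ‖x‖ ≤ γhat * V x ^ (1/q) := by
        rw [hγhat]
        calc γ * ‖x‖ ≤ γ * ((V x / a₁) ^ (1/q)) := by
              exact mul_le_mul_of_nonneg_left hx_bound hγ.le
          _ = γ / a₁ ^ (1/q) * V x ^ (1/q) := by rw [hsplit]; ring
      calc T * γ * ‖x‖ = T * (γ * ‖x‖) := by ring
        _ ≤ T * (γhat * V x ^ (1/q)) := mul_le_mul_of_nonneg_left this hT.le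
        _ = T * γhat * V x ^ (1/q) := by ring
    linarith
  have hVnext : V (ψ T x (M z)) ≤ Vbar := by
    have h1mT : 0 ≤ 1 - T * abar := by nlinarith
    have hdz2 : ‖z - zbar x‖ ≤ abar * Vbar / μ := hdz.trans (hrtz ▸ min_le_right _ _)
    have : (1 - T * abar) * V x + T * μ * ‖z - zbar x‖ ≤
        (1 - T * abar) * Vbar + T * μ * (abar * Vbar / μ) := by
      have h1 := mul_le_mul_of_nonneg_left hVx h1mT
      have h2 := mul_le_mul_of_nonneg_left hdz2 (by positivity : (0:ℝ) ≤ T * μ)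
      linarith
    have heq : (1 - T * abar) * Vbar + T * μ * (abar * Vbar / μ) = Vbar := by
      field_simp; ring
    linarith
  have hVq : V x ^ (1/q) ≤ Vbar ^ (1/q) :=
    Real.rpow_le_rpow (hVnonneg x) hVx hiq.le
  have hVbq : (0:ℝ) < Vbar ^ (1/q) := Real.rpow_pos_of_pos hVbar _
  have ha₁q : (0:ℝ) < a₁ ^ (1/q) := Real.rpow_pos_of_pos ha₁ _
  have hγhat_pos : 0 < γhat := by rw [hγhat]; positivity
  have hznext : ‖φ (ψ T x (M z)) z - zbar (ψ T x (M z))‖ ≤ rtz := by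
    have hkey : T * γhat * V x ^ (1/q) ≤ (1 - κ) * rtz := by
      have h4 : T * γhat * V x ^ (1/q) ≤ T₄' * γhat * Vbar ^ (1/q) := by
        have := mul_le_mul hTT4 hVq (Real.rpow_nonneg (hVnonneg x) _) (le_trans hT.le hTT4)
        nlinarith
      have heq : T₄' * γhat * Vbar ^ (1/q) = (1 - κ) * rtz := by
        rw [hT₄', hγhat]; field_simp
      linarith
    have hκd : κ * ‖z - zbar x‖ ≤ κ * rtz := mul_le_mul_of_nonneg_left hdz hκ0
    linarith
  exact ⟨⟨hVnext, hznext⟩, h1, key2⟩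
end

section
/- Set β := ā/(2·q·γ̂) and T₅ := β·(1 − κ)/μ̂. Then for every T with 0 < T < T₅ and T·ā ≤ 1, there exists d̂ > 0 such that −1 + (1 − T·ā)^{1/q} + T·γ̂·β ≤ −d̂ and T·μ̂ + (κ − 1)·β ≤ −d̂. Consequently, the auxiliary dynamics ν₊ = (1 − T·ā)^{1/q}·ν + T·μ̂·ε, ε₊ = T·γ̂·ν + κ·ε admit the linear Lyapunov function V_l(ν, ε) := ν + β·ε on the nonnegative quadrant: for all ν, ε ≥ 0, V_l(ν₊, ε₊) − V_l(ν, ε) ≤ −d̂·(ν + ε), and the auxiliary dynamics are asymptotically stable on the nonnegative quadrant. -/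
/-- With `β := ā/(2qγ̂)` and `T₅ := β(1 − κ)/μ̂`, for every
`T ∈ (0, T₅)` with `T·ā ≤ 1` there is a margin `d̂ > 0` such that
`−1 + (1 − Tā)^{1/q} + Tγ̂β ≤ −d̂` and `Tμ̂ + (κ − 1)β ≤ −d̂`; consequently
`V_l(ν, ε) := ν + β·ε` is a linear Lyapunov function for the auxiliary dynamics
`ν₊ = (1 − Tā)^{1/q}ν + Tμ̂ε`, `ε₊ = Tγ̂ν + κε` on the nonnegative quadrant, and
these dynamics are asymptotically stable there. -/
theorem aux_dynamics_stability
    (abar γhat μhat q κ : ℝ)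
    (habar : 0 < abar) (hγhat : 0 < γhat) (hμhat : 0 < μhat)
    (hq : 1 ≤ q) (hκ0 : 0 ≤ κ) (hκ1 : κ < 1)
    (β T₅ : ℝ)
    (hβ : β = abar / (2 * q * γhat))
    (hT₅ : T₅ = β * (1 - κ) / μhat) :
    ∀ T : ℝ, 0 < T → T < T₅ → T * abar ≤ 1 →
      ∃ dhat : ℝ, 0 < dhat ∧
        (-1 + (1 - T * abar) ^ (1/q) + T * γhat * β ≤ -dhat ∧
          T * μhat + (κ - 1) * β ≤ -dhat) ∧
        (∀ ν ε : ℝ, 0 ≤ ν → 0 ≤ ε →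
          (((1 - T * abar) ^ (1/q) * ν + T * μhat * ε) +
              β * (T * γhat * ν + κ * ε)) - (ν + β * ε) ≤ -(dhat * (ν + ε))) ∧
        (∀ v e : ℕ → ℝ, 0 ≤ v 0 → 0 ≤ e 0 →
          (∀ k : ℕ, v (k + 1) = (1 - T * abar) ^ (1/q) * v k + T * μhat * e k ∧
            e (k + 1) = T * γhat * v k + κ * e k) →
          Filter.Tendsto (fun k : ℕ => (v k, e k)) Filter.atTop
            (nhds (0, 0))) := by
  intro T hT0 hTT₅ hTa
  have hq0 : (0:ℝ) < q := lt_of_lt_of_le one_pos hq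
  have hβ0 : 0 < β := by rw [hβ]; positivity
  -- Bernoulli
  have hbern : (1 - T * abar) ^ (1/q) ≤ 1 - (1/q) * (T * abar) := by
    have := rpow_one_add_le_one_add_mul_self (s := -(T * abar)) (by linarith)
      (p := 1/q) (by positivity) (by rw [div_le_one hq0]; linarith)
    have h1 : 1 + -(T * abar) = 1 - T * abar := by ring
    rw [h1] at this
    linarith
  have hγβ : T * γhat * β = T * abar / (2 * q) := by
    rw [hβ]; field_simp
  set m1 := T * abar / (2 * q) with hm1def
  set m2 := β * (1 - κ) - T * μhat with hm2def
  have hm1 : 0 < m1 := by positivity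
  have hm2 : 0 < m2 := by
    have : T * μhat < β * (1 - κ) := by
      rw [hT₅] at hTT₅
      calc T * μhat < (β * (1 - κ) / μhat) * μhat :=
            mul_lt_mul_of_pos_right hTT₅ hμhat
        _ = β * (1 - κ) := by field_simp
    linarith
  set dhat := min m1 m2 with hdhat
  have hd0 : 0 < dhat := lt_min hm1 hm2
  have hc1 : -1 + (1 - T * abar) ^ (1/q) + T * γhat * β ≤ -dhat := by
    have h1 : -1 + (1 - T * abar) ^ (1/q) + T * γhat * β ≤ -m1 := by
      rw [hγβ]
      have : (1/q) * (T * abar) = 2 * (T * abar / (2 * q)) := by field_simp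
      linarith [hbern, this ▸ hbern]
    have : dhat ≤ m1 := min_le_left _ _
    linarith
  have hc2 : T * μhat + (κ - 1) * β ≤ -dhat := by
    have : dhat ≤ m2 := min_le_right _ _
    have h2 : T * μhat + (κ - 1) * β = -m2 := by rw [hm2def]; ring
    linarith
  have hlyap : ∀ ν ε : ℝ, 0 ≤ ν → 0 ≤ ε →
      (((1 - T * abar) ^ (1/q) * ν + T * μhat * ε) +
          β * (T * γhat * ν + κ * ε)) - (ν + β * ε) ≤ -(dhat * (ν + ε)) := by
    intro ν ε hν hε
    nlinarith [mul_le_mul_of_nonneg_right hc1 hν, mul_le_mul_of_nonneg_right hc2 hε]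
  refine ⟨dhat, hd0, ⟨hc1, hc2⟩, hlyap, ?_⟩
  intro v e hv0 he0 hrec
  have hA : 0 ≤ (1 - T * abar) ^ (1/q) := Real.rpow_nonneg (by linarith) _
  have hpos : ∀ k, 0 ≤ v k ∧ 0 ≤ e k := by
    intro k
    induction k with
    | zero => exact ⟨hv0, he0⟩
    | succ n ih =>
      obtain ⟨h1, h2⟩ := hrec n
      refine ⟨?_, ?_⟩
      · rw [h1]
        exact add_nonneg (mul_nonneg hA ih.1)
          (mul_nonneg (mul_nonneg hT0.le hμhat.le) ih.2)
      · rw [h2]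
        exact add_nonneg (mul_nonneg (mul_nonneg hT0.le hγhat.le) ih.1)
          (mul_nonneg hκ0 ih.2)
  set M := max 1 β with hM
  have hM0 : 0 < M := lt_of_lt_of_le one_pos (le_max_left _ _)
  set r := max 0 (1 - dhat / M) with hr
  have hr0 : 0 ≤ r := le_max_left _ _
  have hr1 : r < 1 := by
    have : 0 < dhat / M := div_pos hd0 hM0
    exact max_lt one_pos (by linarith)
  have hVnn : ∀ k, 0 ≤ v k + β * e k := fun k =>
    add_nonneg (hpos k).1 (mul_nonneg hβ0.le (hpos k).2)
  have hVdec : ∀ k, v (k + 1) + β * e (k + 1) ≤ r * (v k + β * e k) := by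
    intro k
    obtain ⟨h1, h2⟩ := hrec k
    obtain ⟨hvk, hek⟩ := hpos k
    have hly := hlyap (v k) (e k) hvk hek
    have hsum : v k + β * e k ≤ M * (v k + e k) := by
      have hb : β ≤ M := le_max_right _ _
      have h1M : (1:ℝ) ≤ M := le_max_left _ _
      nlinarith
    have step2 : v (k + 1) + β * e (k + 1) ≤ (1 - dhat / M) * (v k + β * e k) := by
      have hdm : dhat / M * (v k + β * e k) ≤ dhat * (v k + e k) := by
        rw [div_mul_eq_mul_div, div_le_iff₀ hM0]
        calc dhat * (v k + β * e k) ≤ dhat * (M * (v k + e k)) :=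
              mul_le_mul_of_nonneg_left hsum hd0.le
          _ = dhat * (v k + e k) * M := by ring
      rw [h1, h2]
      linarith
    calc v (k + 1) + β * e (k + 1) ≤ (1 - dhat / M) * (v k + β * e k) := step2
      _ ≤ r * (v k + β * e k) :=
          mul_le_mul_of_nonneg_right (le_max_right _ _) (hVnn k)
  have hVbound : ∀ k, v k + β * e k ≤ r ^ k * (v 0 + β * e 0) := by
    intro k
    induction k with
    | zero => simp
    | succ n ih =>
      calc v (n + 1) + β * e (n + 1) ≤ r * (v n + β * e n) := hVdec n
        _ ≤ r * (r ^ n * (v 0 + β * e 0)) := mul_le_mul_of_nonneg_left ih hr0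
        _ = r ^ (n + 1) * (v 0 + β * e 0) := by ring
  have hrtend : Filter.Tendsto (fun k : ℕ => r ^ k * (v 0 + β * e 0))
      Filter.atTop (nhds 0) := by
    have := (tendsto_pow_atTop_nhds_zero_of_lt_one hr0 hr1).mul_const (v 0 + β * e 0)
    simpa using this
  have hvtend : Filter.Tendsto v Filter.atTop (nhds 0) := by
    refine squeeze_zero (fun k => (hpos k).1) (fun k => ?_) hrtend
    have h1 := hVbound k
    have h2 := mul_nonneg hβ0.le (hpos k).2
    linarith
  have hetend : Filter.Tendsto e Filter.atTop (nhds 0) := by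
    have hrtend2 : Filter.Tendsto (fun k : ℕ => (1 / β) * (r ^ k * (v 0 + β * e 0)))
        Filter.atTop (nhds 0) := by
      have := hrtend.const_mul (1 / β)
      simpa using this
    refine squeeze_zero (fun k => (hpos k).2) (fun k => ?_) hrtend2
    have h1 : β * e k ≤ r ^ k * (v 0 + β * e 0) := by
      have := hVbound k
      have := (hpos k).1
      linarith
    calc e k = (1 / β) * (β * e k) := by field_simp
      _ ≤ (1 / β) * (r ^ k * (v 0 + β * e 0)) :=
          mul_le_mul_of_nonneg_left h1 (by positivity)
  exact hvtend.prodMk_nhds hetend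
end

section
/- Define V_so(x, z) := V(x)^{1/q} + β·‖z − z̄(x)‖ on Σ. Then there exist strictly positive constants w̃₁, w̃₂, w̃₃ such that for all ξ = (x, z) ∈ Σ: (i) w̃₁·‖ξ‖ ≤ V_so(ξ) ≤ w̃₂·‖ξ‖; (ii) V_so(Φ(ξ)) − V_so(ξ) ≤ −w̃₃·‖ξ‖, where ‖ξ‖ := (‖x‖² + ‖z‖²)^{1/2}. Consequently the origin ξ = 0 is an exponentially asymptotically stable equilibrium of the combined system-optimizer dynamics ξ₊ = Φ(ξ) with region of attraction Σ: every trajectory starting in Σ remains in Σ and converges to 0 exponentially. -/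
set_option maxHeartbeats 2000000 in
/-- Main theorem (Theorem 4 of the paper): the function
`V_so(x, z) := V(x)^{1/q} + β‖z − z̄(x)‖` is a Lyapunov function on `Σ` for the
combined system-optimizer dynamics `ξ₊ = Φ(ξ)`: there are `w̃₁, w̃₂, w̃₃ > 0` with
`w̃₁‖ξ‖ ≤ V_so(ξ) ≤ w̃₂‖ξ‖` and `V_so(Φ(ξ)) − V_so(ξ) ≤ −w̃₃‖ξ‖` on `Σ`, where
`‖ξ‖ = (‖x‖² + ‖z‖²)^{1/2}`; consequently the origin is exponentially
asymptotically stable with region of attraction `Σ`: trajectories starting in `Σ`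
stay in `Σ` and converge to `0` exponentially. -/
theorem system_optimizer_lyapunov {nx nz : ℕ}
    (q T a₁ a₂ abar μhat γhat σ β dhat κ Vbar rtz : ℝ)
    (hq : 1 ≤ q) (hT : 0 < T) (hTa : T * abar ≤ 1)
    (ha₁ : 0 < a₁) (ha₂ : 0 < a₂) (habar : 0 < abar) (hμhat : 0 < μhat)
    (hγhat : 0 < γhat) (hσ : 0 < σ) (hβ : 0 < β) (hdhat : 0 < dhat)
    (hκ0 : 0 ≤ κ) (hκ1 : κ < 1) (hVbar : 0 < Vbar) (hrtz : 0 < rtz)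
    (V : EuclideanSpace ℝ (Fin nx) → ℝ)
    (hVnonneg : ∀ x : EuclideanSpace ℝ (Fin nx), 0 ≤ V x)
    (zbar : EuclideanSpace ℝ (Fin nx) → EuclideanSpace ℝ (Fin nz))
    (Φ : EuclideanSpace ℝ (Fin nx) × EuclideanSpace ℝ (Fin nz) →
      EuclideanSpace ℝ (Fin nx) × EuclideanSpace ℝ (Fin nz))
    (hsandwich : ∀ x : EuclideanSpace ℝ (Fin nx), V x ≤ Vbar →
      a₁ * ‖x‖ ^ q ≤ V x ∧ V x ≤ a₂ * ‖x‖ ^ q)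
    (hzbar : ∀ x : EuclideanSpace ℝ (Fin nx), V x ≤ Vbar → ‖zbar x‖ ≤ σ * ‖x‖)
    (hinv : ∀ (x : EuclideanSpace ℝ (Fin nx)) (z : EuclideanSpace ℝ (Fin nz)),
      V x ≤ Vbar → ‖z - zbar x‖ ≤ rtz →
      V (Φ (x, z)).1 ≤ Vbar ∧ ‖(Φ (x, z)).2 - zbar (Φ (x, z)).1‖ ≤ rtz)
    (hstep : ∀ (x : EuclideanSpace ℝ (Fin nx)) (z : EuclideanSpace ℝ (Fin nz)),
      V x ≤ Vbar → ‖z - zbar x‖ ≤ rtz →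
      V (Φ (x, z)).1 ^ (1/q) ≤
          (1 - T * abar) ^ (1/q) * V x ^ (1/q) + T * μhat * ‖z - zbar x‖ ∧
        ‖(Φ (x, z)).2 - zbar (Φ (x, z)).1‖ ≤
          T * γhat * V x ^ (1/q) + κ * ‖z - zbar x‖)
    (hmargin₁ : (1 - T * abar) ^ (1/q) - 1 + T * γhat * β ≤ -dhat)
    (hmargin₂ : T * μhat - (1 - κ) * β ≤ -dhat) :
    ∃ w₁ w₂ w₃ : ℝ, 0 < w₁ ∧ 0 < w₂ ∧ 0 < w₃ ∧
      (∀ (x : EuclideanSpace ℝ (Fin nx)) (z : EuclideanSpace ℝ (Fin nz)),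
        V x ≤ Vbar → ‖z - zbar x‖ ≤ rtz →
        (w₁ * Real.sqrt (‖x‖ ^ 2 + ‖z‖ ^ 2) ≤ V x ^ (1/q) + β * ‖z - zbar x‖ ∧
          V x ^ (1/q) + β * ‖z - zbar x‖ ≤ w₂ * Real.sqrt (‖x‖ ^ 2 + ‖z‖ ^ 2)) ∧
        V (Φ (x, z)).1 ^ (1/q) + β * ‖(Φ (x, z)).2 - zbar (Φ (x, z)).1‖ -
            (V x ^ (1/q) + β * ‖z - zbar x‖) ≤
          -(w₃ * Real.sqrt (‖x‖ ^ 2 + ‖z‖ ^ 2))) ∧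
      ∃ c ρ : ℝ, 1 ≤ c ∧ 0 ≤ ρ ∧ ρ < 1 ∧
        ∀ ξ : ℕ → EuclideanSpace ℝ (Fin nx) × EuclideanSpace ℝ (Fin nz),
          V (ξ 0).1 ≤ Vbar → ‖(ξ 0).2 - zbar (ξ 0).1‖ ≤ rtz →
          (∀ k : ℕ, ξ (k + 1) = Φ (ξ k)) →
          (∀ k : ℕ, V (ξ k).1 ≤ Vbar ∧ ‖(ξ k).2 - zbar (ξ k).1‖ ≤ rtz) ∧
          (∀ k : ℕ, Real.sqrt (‖(ξ k).1‖ ^ 2 + ‖(ξ k).2‖ ^ 2) ≤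
            c * ρ ^ k * Real.sqrt (‖(ξ 0).1‖ ^ 2 + ‖(ξ 0).2‖ ^ 2)) := by
  
  have hq0 : (0:ℝ) < q := lt_of_lt_of_le one_pos hq
  have hq' : q ≠ 0 := ne_of_gt hq0
  have h1q : (0:ℝ) ≤ 1/q := by positivity
  obtain ⟨A, hAdef⟩ : ∃ _y : ℝ, _y = a₁ ^ (1/q) := ⟨_, rfl⟩
  obtain ⟨B, hBdef⟩ : ∃ _y : ℝ, _y = a₂ ^ (1/q) := ⟨_, rfl⟩
  have hA : 0 < A := by rw [hAdef]; exact Real.rpow_pos_of_pos ha₁ _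
  have hB : 0 < B := by rw [hBdef]; exact Real.rpow_pos_of_pos ha₂ _
  have hVq_ub : ∀ x : EuclideanSpace ℝ (Fin nx), V x ≤ Vbar → V x ^ (1/q) ≤ B * ‖x‖ := by
    intro x hx
    calc V x ^ (1/q) ≤ (a₂ * ‖x‖ ^ q) ^ (1/q) :=
          Real.rpow_le_rpow (hVnonneg x) (hsandwich x hx).2 h1q
      _ = B * ‖x‖ := by
          rw [hBdef, Real.mul_rpow ha₂.le (Real.rpow_nonneg (norm_nonneg x) q),
            ← Real.rpow_mul (norm_nonneg x), mul_one_div_cancel hq', Real.rpow_one]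
  have hVq_lb : ∀ x : EuclideanSpace ℝ (Fin nx), V x ≤ Vbar → A * ‖x‖ ≤ V x ^ (1/q) := by
    intro x hx
    have hb : (0:ℝ) ≤ a₁ * ‖x‖ ^ q := by positivity
    calc A * ‖x‖ = (a₁ * ‖x‖ ^ q) ^ (1/q) := by
          rw [hAdef, Real.mul_rpow ha₁.le (Real.rpow_nonneg (norm_nonneg x) q),
            ← Real.rpow_mul (norm_nonneg x), mul_one_div_cancel hq', Real.rpow_one]
      _ ≤ V x ^ (1/q) := Real.rpow_le_rpow hb (hsandwich x hx).1 h1q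
  have hVqnn : ∀ x : EuclideanSpace ℝ (Fin nx), 0 ≤ V x ^ (1/q) :=
    fun x => Real.rpow_nonneg (hVnonneg x) _
  have hden : 0 < A + β * σ := by positivity
  obtain ⟨μ, hμdef⟩ : ∃ _y : ℝ, _y = min 1 (1/β) := ⟨_, rfl⟩
  have hμpos : 0 < μ := by rw [hμdef]; exact lt_min one_pos (by positivity)
  have hμ1 : μ ≤ 1 := by rw [hμdef]; exact min_le_left _ _
  have hμβ : μ * β ≤ 1 := by
    rw [hμdef]
    calc min 1 (1/β) * β ≤ (1/β) * β := mul_le_mul_of_nonneg_right (min_le_right 1 (1/β)) hβ.le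
      _ = 1 := by field_simp
  obtain ⟨m, hmdef⟩ : ∃ _y : ℝ, _y = dhat * μ := ⟨_, rfl⟩
  have hm : 0 < m := by rw [hmdef]; positivity
  obtain ⟨w₁, hw₁def⟩ : ∃ _y : ℝ, _y = min A (A * β / (A + β * σ)) / 2 := ⟨_, rfl⟩
  obtain ⟨w₂, hw₂def⟩ : ∃ _y : ℝ, _y = B + β * σ + β := ⟨_, rfl⟩
  obtain ⟨w₃, hw₃def⟩ : ∃ _y : ℝ, _y = m * w₁ := ⟨_, rfl⟩
  have hw₁ : 0 < w₁ := by rw [hw₁def]; exact half_pos (lt_min hA (by positivity))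
  have hw₂ : 0 < w₂ := by rw [hw₂def]; positivity
  have hw₃ : 0 < w₃ := by rw [hw₃def]; positivity
  have hsqx : ∀ (x : EuclideanSpace ℝ (Fin nx)) (z : EuclideanSpace ℝ (Fin nz)),
      ‖x‖ ≤ Real.sqrt (‖x‖ ^ 2 + ‖z‖ ^ 2) := fun x z =>
    (Real.le_sqrt (norm_nonneg x) (by positivity)).mpr (by nlinarith [sq_nonneg ‖z‖])
  have hsqz : ∀ (x : EuclideanSpace ℝ (Fin nx)) (z : EuclideanSpace ℝ (Fin nz)),
      ‖z‖ ≤ Real.sqrt (‖x‖ ^ 2 + ‖z‖ ^ 2) := fun x z =>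
    (Real.le_sqrt (norm_nonneg z) (by positivity)).mpr (by nlinarith [sq_nonneg ‖x‖])
  have hsqsum : ∀ (x : EuclideanSpace ℝ (Fin nx)) (z : EuclideanSpace ℝ (Fin nz)),
      Real.sqrt (‖x‖ ^ 2 + ‖z‖ ^ 2) ≤ ‖x‖ + ‖z‖ := by
    intro x z
    calc Real.sqrt (‖x‖ ^ 2 + ‖z‖ ^ 2) ≤ Real.sqrt ((‖x‖ + ‖z‖) ^ 2) :=
          Real.sqrt_le_sqrt (by nlinarith [mul_nonneg (norm_nonneg x) (norm_nonneg z)])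
      _ = ‖x‖ + ‖z‖ := Real.sqrt_sq (by positivity)
  -- lower bound
  have hLlow : ∀ (x : EuclideanSpace ℝ (Fin nx)) (z : EuclideanSpace ℝ (Fin nz)),
      V x ≤ Vbar → w₁ * Real.sqrt (‖x‖ ^ 2 + ‖z‖ ^ 2) ≤ V x ^ (1/q) + β * ‖z - zbar x‖ := by
    intro x z hx
    have hs : (0:ℝ) ≤ ‖z - zbar x‖ := norm_nonneg _
    have hL0 : A * ‖x‖ ≤ V x ^ (1/q) + β * ‖z - zbar x‖ :=
      le_trans (hVq_lb x hx) (le_add_of_nonneg_right (by positivity))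
    have hzx : ‖z‖ ≤ ‖z - zbar x‖ + σ * ‖x‖ := by
      calc ‖z‖ = ‖(z - zbar x) + zbar x‖ := by simp

        _ ≤ ‖z - zbar x‖ + ‖zbar x‖ := norm_add_le _ _
        _ ≤ ‖z - zbar x‖ + σ * ‖x‖ := by linarith [hzbar x hx]
    obtain ⟨L, hLdef⟩ : ∃ _y : ℝ, _y = V x ^ (1/q) + β * ‖z - zbar x‖ := ⟨_, rfl⟩
    rw [← hLdef] at hL0 ⊢
    have hLnn : 0 ≤ L := by rw [hLdef]; exact add_nonneg (hVqnn x) (mul_nonneg hβ.le hs)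
    have hβs : β * ‖z - zbar x‖ ≤ L := by rw [hLdef]; exact le_add_of_nonneg_left (hVqnn x)
    have hz2 : A * β / (A + β * σ) * ‖z‖ ≤ L := by
      rw [div_mul_eq_mul_div, div_le_iff₀ hden]
      nlinarith [mul_le_mul_of_nonneg_left hzx (mul_pos hA hβ).le,
        mul_le_mul_of_nonneg_left hβs hA.le,
        mul_le_mul_of_nonneg_left hL0 (mul_nonneg hβ.le hσ.le)]
    have hminx : 2 * w₁ ≤ A := by
      have h := min_le_left A (A * β / (A + β * σ)); rw [hw₁def]; linarith
    have hminz : 2 * w₁ ≤ A * β / (A + β * σ) := by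
      have h := min_le_right A (A * β / (A + β * σ)); rw [hw₁def]; linarith
    calc w₁ * Real.sqrt (‖x‖ ^ 2 + ‖z‖ ^ 2) ≤ w₁ * (‖x‖ + ‖z‖) :=
          mul_le_mul_of_nonneg_left (hsqsum x z) hw₁.le
      _ ≤ L := by
          nlinarith [mul_le_mul_of_nonneg_right hminx (norm_nonneg x),
            mul_le_mul_of_nonneg_right hminz (norm_nonneg z), hL0, hz2]
  -- upper bound
  have hLup : ∀ (x : EuclideanSpace ℝ (Fin nx)) (z : EuclideanSpace ℝ (Fin nz)),
      V x ≤ Vbar → V x ^ (1/q) + β * ‖z - zbar x‖ ≤ w₂ * Real.sqrt (‖x‖ ^ 2 + ‖z‖ ^ 2) := by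
    intro x z hx
    have hs : ‖z - zbar x‖ ≤ ‖z‖ + σ * ‖x‖ := by
      calc ‖z - zbar x‖ ≤ ‖z‖ + ‖zbar x‖ := norm_sub_le _ _
        _ ≤ ‖z‖ + σ * ‖x‖ := by linarith [hzbar x hx]
    have h1 := hVq_ub x hx
    have hx1 := hsqx x z
    have hz1 := hsqz x z
    have hsq0 : 0 ≤ Real.sqrt (‖x‖ ^ 2 + ‖z‖ ^ 2) := Real.sqrt_nonneg _
    rw [hw₂def]
    nlinarith [mul_le_mul_of_nonneg_left hs hβ.le,
      mul_le_mul_of_nonneg_left hx1 hB.le,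
      mul_le_mul_of_nonneg_left hz1 hβ.le,
      mul_le_mul_of_nonneg_left hx1 (mul_nonneg hβ.le hσ.le), h1]
  -- one-step decrease
  have hdec : ∀ (x : EuclideanSpace ℝ (Fin nx)) (z : EuclideanSpace ℝ (Fin nz)),
      V x ≤ Vbar → ‖z - zbar x‖ ≤ rtz →
      V (Φ (x, z)).1 ^ (1/q) + β * ‖(Φ (x, z)).2 - zbar (Φ (x, z)).1‖ ≤
        (1 - m) * (V x ^ (1/q) + β * ‖z - zbar x‖) := by
    intro x z hx hz
    obtain ⟨h1, h2⟩ := hstep x z hx hz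
    have hs : (0:ℝ) ≤ ‖z - zbar x‖ := norm_nonneg _
    have hVq := hVqnn x
    have hdhat' : dhat * (V x ^ (1/q) + ‖z - zbar x‖) ≥ m * (V x ^ (1/q) + β * ‖z - zbar x‖) := by
      rw [hmdef]
      nlinarith [mul_le_mul_of_nonneg_right hμ1 hVq,
        mul_le_mul_of_nonneg_right hμβ hs, hdhat.le]
    nlinarith [mul_le_mul_of_nonneg_left h2 hβ.le,
      mul_le_mul_of_nonneg_right hmargin₁ hVq,
      mul_le_mul_of_nonneg_right hmargin₂ hs]
  refine ⟨w₁, w₂, w₃, hw₁, hw₂, hw₃, ?_, ?_⟩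
  · intro x z hx hz
    refine ⟨⟨hLlow x z hx, hLup x z hx⟩, ?_⟩
    have h := hdec x z hx hz
    have hlow := hLlow x z hx
    have hsq0 : 0 ≤ Real.sqrt (‖x‖ ^ 2 + ‖z‖ ^ 2) := Real.sqrt_nonneg _
    rw [hw₃def]
    nlinarith
  · obtain ⟨ρ, hρdef⟩ : ∃ _y : ℝ, _y = max (1 - m) (1/2) := ⟨_, rfl⟩
    have hρ0 : (0:ℝ) ≤ ρ := by rw [hρdef]; exact le_trans (by norm_num) (le_max_right _ _)
    have hρ1 : ρ < 1 := by rw [hρdef]; exact max_lt (by linarith) (by norm_num)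
    obtain ⟨c, hcdef⟩ : ∃ _y : ℝ, _y = max 1 (w₂ / w₁) := ⟨_, rfl⟩
    have hc1 : (1:ℝ) ≤ c := by rw [hcdef]; exact le_max_left _ _
    have hcw : w₂ ≤ c * w₁ := by
      have : w₂ / w₁ ≤ c := by rw [hcdef]; exact le_max_right _ _
      calc w₂ = (w₂ / w₁) * w₁ := by field_simp
        _ ≤ c * w₁ := mul_le_mul_of_nonneg_right this hw₁.le
    refine ⟨c, ρ, hc1, hρ0, hρ1, ?_⟩
    intro ξ h0V h0z hstepξ
    have hSig : ∀ k : ℕ, V (ξ k).1 ≤ Vbar ∧ ‖(ξ k).2 - zbar (ξ k).1‖ ≤ rtz := by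
      intro k
      induction k with
      | zero => exact ⟨h0V, h0z⟩
      | succ k ih =>
        rw [hstepξ k, show Φ (ξ k) = Φ ((ξ k).1, (ξ k).2) by rw [Prod.mk.eta]]
        exact hinv (ξ k).1 (ξ k).2 ih.1 ih.2
    refine ⟨hSig, ?_⟩
    set L : (EuclideanSpace ℝ (Fin nx) × EuclideanSpace ℝ (Fin nz)) → ℝ :=
      fun p => V p.1 ^ (1/q) + β * ‖p.2 - zbar p.1‖ with hLdef
    have hLnn : ∀ p, 0 ≤ L p := by
      intro p; exact add_nonneg (hVqnn _) (by positivity)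
    have hLiter : ∀ k : ℕ, L (ξ k) ≤ ρ ^ k * L (ξ 0) := by
      intro k
      induction k with
      | zero => simp
      | succ k ih =>
        have hstep1 : L (ξ (k+1)) ≤ (1 - m) * L (ξ k) := by
          rw [hstepξ k, show Φ (ξ k) = Φ ((ξ k).1, (ξ k).2) by rw [Prod.mk.eta]]
          exact hdec (ξ k).1 (ξ k).2 (hSig k).1 (hSig k).2
        have h1mρ : 1 - m ≤ ρ := by rw [hρdef]; exact le_max_left _ _
        calc L (ξ (k+1)) ≤ (1 - m) * L (ξ k) := hstep1
          _ ≤ ρ * L (ξ k) := mul_le_mul_of_nonneg_right h1mρ (hLnn _)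
          _ ≤ ρ * (ρ ^ k * L (ξ 0)) := mul_le_mul_of_nonneg_left ih hρ0
          _ = ρ ^ (k+1) * L (ξ 0) := by ring
    intro k
    have hlk := hLlow (ξ k).1 (ξ k).2 (hSig k).1
    have hu0 := hLup (ξ 0).1 (ξ 0).2 (hSig 0).1
    have hρk : (0:ℝ) ≤ ρ ^ k := pow_nonneg hρ0 k
    have hL0 : L (ξ 0) ≤ c * w₁ * Real.sqrt (‖(ξ 0).1‖ ^ 2 + ‖(ξ 0).2‖ ^ 2) := by
      refine le_trans hu0 (mul_le_mul_of_nonneg_right hcw (Real.sqrt_nonneg _))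
    have hchain : w₁ * Real.sqrt (‖(ξ k).1‖ ^ 2 + ‖(ξ k).2‖ ^ 2) ≤
        ρ ^ k * (c * w₁ * Real.sqrt (‖(ξ 0).1‖ ^ 2 + ‖(ξ 0).2‖ ^ 2)) :=
      le_trans hlk (le_trans (hLiter k) (mul_le_mul_of_nonneg_left hL0 hρk))
    have := (mul_le_mul_iff_right₀ hw₁).mp (by linarith [hchain] :
      w₁ * Real.sqrt (‖(ξ k).1‖ ^ 2 + ‖(ξ k).2‖ ^ 2) ≤
        w₁ * (c * ρ ^ k * Real.sqrt (‖(ξ 0).1‖ ^ 2 + ‖(ξ 0).2‖ ^ 2)))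
    linarith [this]
end

section
/- Suppose a₁^{1/q} − β·σ > 0. Then for every ξ = (x, z) ∈ Σ, V_so(ξ) := V(x)^{1/q} + β·‖z − z̄(x)‖ satisfies V_so(ξ) ≥ min{ (a₁^{1/q} − β·σ)/√n_x, β/√n_z }·‖ξ‖, where ‖ξ‖ := (‖x‖² + ‖z‖²)^{1/2}. -/
/-- Lower bound on `V_so` in the case `a₁^{1/q} − βσ > 0`: for
`ξ = (x, z) ∈ Σ`, `V_so(ξ) = V(x)^{1/q} + β‖z − z̄(x)‖ ≥
min{(a₁^{1/q} − βσ)/√n_x, β/√n_z}·‖ξ‖`, with `‖ξ‖ = (‖x‖² + ‖z‖²)^{1/2}`. -/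
theorem Vso_lower_bound_case_pos {nx nz : ℕ}
    (q a₁ σ β Vbar rtz : ℝ)
    (hq : 1 ≤ q) (ha₁ : 0 < a₁) (hσ : 0 < σ) (hβ : 0 < β)
    (hVbar : 0 < Vbar) (hrtz : 0 < rtz)
    (hcase : 0 < a₁ ^ (1/q) - β * σ)
    (V : EuclideanSpace ℝ (Fin nx) → ℝ)
    (hVnonneg : ∀ x : EuclideanSpace ℝ (Fin nx), 0 ≤ V x)
    (hVlower : ∀ x : EuclideanSpace ℝ (Fin nx), V x ≤ Vbar → a₁ * ‖x‖ ^ q ≤ V x)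
    (zbar : EuclideanSpace ℝ (Fin nx) → EuclideanSpace ℝ (Fin nz))
    (hzbar : ∀ x : EuclideanSpace ℝ (Fin nx), V x ≤ Vbar → ‖zbar x‖ ≤ σ * ‖x‖) :
    ∀ (x : EuclideanSpace ℝ (Fin nx)) (z : EuclideanSpace ℝ (Fin nz)),
      V x ≤ Vbar → ‖z - zbar x‖ ≤ rtz →
      min ((a₁ ^ (1/q) - β * σ) / Real.sqrt nx) (β / Real.sqrt nz) *
          Real.sqrt (‖x‖ ^ 2 + ‖z‖ ^ 2) ≤
        V x ^ (1/q) + β * ‖z - zbar x‖ := by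
  intro x z hV hz
  have hq0 : q ≠ 0 := by linarith
  have hxn : (0:ℝ) ≤ ‖x‖ := norm_nonneg _
  have hzn : (0:ℝ) ≤ ‖z‖ := norm_nonneg _
  set c₁ := a₁ ^ (1/q) - β * σ with hc₁
  set m := min (c₁ / Real.sqrt nx) (β / Real.sqrt nz) with hm
  have hm0 : 0 ≤ m := le_min (by positivity) (by positivity)
  have h1 : c₁ * ‖x‖ + β * ‖z‖ ≤ V x ^ (1/q) + β * ‖z - zbar x‖ := by
    have hVl := hVlower x hV
    have hr : a₁ ^ (1/q) * ‖x‖ ≤ V x ^ (1/q) := by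
      have h := Real.rpow_le_rpow (by positivity) hVl (by positivity : (0:ℝ) ≤ 1/q)
      rwa [Real.mul_rpow ha₁.le (by positivity), ← Real.rpow_mul hxn,
        mul_one_div, div_self hq0, Real.rpow_one] at h
    have hzb := hzbar x hV
    have hns : ‖z‖ - ‖zbar x‖ ≤ ‖z - zbar x‖ := norm_sub_norm_le z (zbar x)
    nlinarith
  have hmx : m * ‖x‖ ≤ c₁ * ‖x‖ := by
    rcases Nat.eq_zero_or_pos nx with h | h
    · have hx0 : ‖x‖ = 0 := by
        subst h
        simp [EuclideanSpace.norm_eq]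
      simp [hx0]
    · have h1n : (1:ℝ) ≤ Real.sqrt nx := by
        rw [show (1:ℝ) = Real.sqrt 1 by simp]
        exact Real.sqrt_le_sqrt (by exact_mod_cast h)
      exact mul_le_mul_of_nonneg_right
        ((min_le_left _ _).trans (div_le_self hcase.le h1n)) hxn
  have hmz : m * ‖z‖ ≤ β * ‖z‖ := by
    rcases Nat.eq_zero_or_pos nz with h | h
    · have hz0 : ‖z‖ = 0 := by
        subst h
        simp [EuclideanSpace.norm_eq]
      simp [hz0]
    · have h1n : (1:ℝ) ≤ Real.sqrt nz := by
        rw [show (1:ℝ) = Real.sqrt 1 by simp]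
        exact Real.sqrt_le_sqrt (by exact_mod_cast h)
      exact mul_le_mul_of_nonneg_right
        ((min_le_right _ _).trans (div_le_self hβ.le h1n)) hzn
  have hsq : Real.sqrt (‖x‖ ^ 2 + ‖z‖ ^ 2) ≤ ‖x‖ + ‖z‖ := by
    rw [show ‖x‖ + ‖z‖ = Real.sqrt ((‖x‖ + ‖z‖)^2) by rw [Real.sqrt_sq (by positivity)]]
    exact Real.sqrt_le_sqrt (by nlinarith)
  calc m * Real.sqrt (‖x‖^2 + ‖z‖^2) ≤ m * (‖x‖ + ‖z‖) :=
        mul_le_mul_of_nonneg_left hsq hm0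
    _ = m * ‖x‖ + m * ‖z‖ := by ring
    _ ≤ c₁ * ‖x‖ + β * ‖z‖ := add_le_add hmx hmz
    _ ≤ _ := h1
end
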